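/- Let 𝒜 be a finite set of alternatives and let V be a set of valuations v : 𝒜 → ℝ that is single-crossing with respect to a total order ≻ᵛ on V and a total order ≻ᵃ on 𝒜. If f : V → 𝒜 is implementable, then f is monotone up to tie-breaking with respect to ≻ᵛ and ≻ᵃ: for every v' ≻ᵛ v and every a' ≻ᵃ a such that f(v) = a' and f(v') = a, it holds that v'(a') − v'(a) = v(a') − v(a). -/
import Mathlib

/-- In a single-crossing domain, every implementable function is
monotone up to tie-breaking: if `v' ≻ᵛ v`, `a' ≻ᵃ a`, `f(v) = a'` and
`f(v') = a`, then `v'(a') − v'(a) = v(a') − v(a)`. -/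
theorem implementable_monotone_up_to_tie_breaking
    {A V : Type*} [Fintype A] [LinearOrder A] [LinearOrder V]
    (val : V → A → ℝ)
    (hsc : ∀ v v' : V, v < v' → ∀ a a' : A, a < a' →
      val v a' - val v a ≤ val v' a' - val v' a)
    (f : V → A)
    (himpl : ∃ P : V → ℝ, ∀ v v' : V, val v (f v') - P v' ≤ val v (f v) - P v) :
    ∀ v v' : V, v < v' → ∀ a a' : A, a < a' → f v = a' → f v' = a →
      val v' a' - val v' a = val v a' - val v a := by
  obtain ⟨P, hP⟩ := himpl
  intro v v' hvv' a a' haa' hfv hfv'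
  have h1 := hP v v'
  have h2 := hP v' v
  rw [hfv, hfv'] at h1 h2
  have h3 := hsc v v' hvv' a a' haa'
  linarith
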